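/- Let n, m ≥ 1, let R : Fin n → Fin m → ℝ be the follower's payoff matrix, let s : Fin n → ℝ satisfy s_i ≥ 0 for all i and ∑_i s_i = 1 (the leader's mixed strategy), let q : Fin m → ℝ satisfy q_j ∈ {0,1} for all j and ∑_j q_j = 1, and let v ∈ ℝ and N ∈ ℝ. Suppose that for every j ∈ Fin m the DOBSS constraint 0 ≤ v − ∑_i R i j · s_i ≤ (1 − q_j) · N holds. Then there is exactly one index j* with q_{j*} = 1, and this j* satisfies v = ∑_i R i j* · s_i and ∑_i R i j · s_i ≤ v for every j ∈ Fin m; that is, q selects a best response of the follower to s and v is the follower's optimal expected payoff. -/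

import Mathlib

open Finset

theorem sum_eq_card_filter_eq_one {ι R : Type*} [Fintype ι]
    [AddCommMonoidWithOne R] [DecidableEq R] {q : ι → R} (hq01 : ∀ j, q j = 0 ∨ q j = 1) :
    ∑ j, q j = #{j | q j = 1} := by
  rw [← sum_boole]
  refine sum_congr rfl fun j _ => ?_
  rcases hq01 j with h | h <;> simp [h]

theorem existsUnique_eq_one_of_sum_eq_one {ι R : Type*} [Fintype ι]
    [AddCommMonoidWithOne R] [CharZero R] {q : ι → R} (hq01 : ∀ j, q j = 0 ∨ q j = 1)
    (hq1 : ∑ j, q j = 1) : ∃! j, q j = 1 := by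
  classical
  rw [sum_eq_card_filter_eq_one hq01, Nat.cast_eq_one,
    card_eq_one_iff_existsUnique] at hq1
  simpa using hq1

theorem dobss_bigM_constraints_force_best_response_general
    (n m : ℕ)
    (R : Fin n → Fin m → ℝ) (s : Fin n → ℝ) (q : Fin m → ℝ) (v N : ℝ)
    (hq01 : ∀ j, q j = 0 ∨ q j = 1) (hq1 : ∑ j, q j = 1)
    (hc : ∀ j, 0 ≤ v - ∑ i, R i j * s i ∧ v - ∑ i, R i j * s i ≤ (1 - q j) * N) :
    (∃! jstar, q jstar = 1) ∧
    (∀ jstar, q jstar = 1 → v = ∑ i, R i jstar * s i) ∧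
    (∀ j, ∑ i, R i j * s i ≤ v) := by
  refine ⟨existsUnique_eq_one_of_sum_eq_one hq01 hq1,
    fun jstar hjstar => ?_, fun j => sub_nonneg.mp (hc j).1⟩
  obtain ⟨hslack_nonneg, hslack_le⟩ := hc jstar
  rw [hjstar, sub_self, zero_mul] at hslack_le
  linarith

/-- **Correctness of the DOBSS big-M encoding.** If the leader's mixed strategy `s`,
the follower's 0/1 pure-strategy vector `q` (summing to 1), the value `v` and the
big-M constant `N` satisfy the DOBSS constraints
`0 ≤ v − ∑ i, R i j * s i ≤ (1 − q j) * N` for all `j`, then `q` selects exactly one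
action `j*`, this action is a best response to `s`, and `v` is the follower's optimal
expected payoff. -/
theorem dobss_bigM_constraints_force_best_response
    (n m : ℕ) (hn : 1 ≤ n) (hm : 1 ≤ m)
    (R : Fin n → Fin m → ℝ) (s : Fin n → ℝ) (q : Fin m → ℝ) (v N : ℝ)
    (hs0 : ∀ i, 0 ≤ s i) (hs1 : ∑ i, s i = 1)
    (hq01 : ∀ j, q j = 0 ∨ q j = 1) (hq1 : ∑ j, q j = 1)
    (hc : ∀ j, 0 ≤ v - ∑ i, R i j * s i ∧ v - ∑ i, R i j * s i ≤ (1 - q j) * N) :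
    (∃! jstar, q jstar = 1) ∧
    (∀ jstar, q jstar = 1 → v = ∑ i, R i jstar * s i) ∧
    (∀ j, ∑ i, R i j * s i ≤ v) :=
  dobss_bigM_constraints_force_best_response_general n m R s q v N hq01 hq1 hc
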